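/- Up to transduction equivalence, the class of all finite graphs is the only class that is an upper bound in ⊑_FO for all classes of bounded expansion: if ℬ is a class of graphs such that every class of bounded expansion is a first-order transduction of ℬ, then the class of all finite graphs is a first-order transduction of ℬ. -/

import Mathlib

open SimpleGraph

/-! ### Finite graphs and colored graphs -/

/-- A finite simple graph. -/
structure FGraph : Type 1 where
  V : Type
  [fin : Finite V]
  G : SimpleGraph V

attribute [instance] FGraph.fin

/-- A finite simple graph colored by `c` unary predicates. -/
structure CGraph (c : ℕ) : Type 1 where
  V : Type
  [fin : Finite V]
  G : SimpleGraph V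
  color : Fin c → Set V

attribute [instance] CGraph.fin

/-! ### First-order formulas over `c`-colored graphs -/

/-- First-order formulas in the language of graphs with `c` unary predicates,
with free variables among `Fin m`. -/
inductive Fml (c : ℕ) : ℕ → Type where
  | eq {m} : Fin m → Fin m → Fml c m
  | adj {m} : Fin m → Fin m → Fml c m
  | col {m} : Fin c → Fin m → Fml c m
  | not {m} : Fml c m → Fml c m
  | or {m} : Fml c m → Fml c m → Fml c m
  | ex {m} : Fml c (m + 1) → Fml c m

/-- Satisfaction of a first-order formula in a colored graph. -/
def Fml.Sat {c : ℕ} (A : CGraph c) : {m : ℕ} → Fml c m → (Fin m → A.V) → Prop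
  | _, .eq i j, v => v i = v j
  | _, .adj i j, v => A.G.Adj (v i) (v j)
  | _, .col i x, v => v x ∈ A.color i
  | _, .not φ, v => ¬ Fml.Sat A φ v
  | _, .or φ ψ, v => Fml.Sat A φ v ∨ Fml.Sat A ψ v
  | _, .ex φ, v => ∃ w : A.V, Fml.Sat A φ (Fin.snoc v w)

/-! ### Simple interpretations and transductions -/

/-- A simple interpretation of graphs in `c`-colored graphs: a pair of formulas
`(ν(x), η(x,y))` with `η` symmetric and anti-reflexive. -/
structure Interp (c : ℕ) where
  ν : Fml c 1
  η : Fml c 2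
  symm : ∀ (A : CGraph c) (u v : A.V), Fml.Sat A η ![u, v] → Fml.Sat A η ![v, u]
  irrefl : ∀ (A : CGraph c) (v : A.V), ¬ Fml.Sat A η ![v, v]

/-- The graph interpreted in a colored graph. -/
def Interp.result {c : ℕ} (I : Interp c) (A : CGraph c) :
    SimpleGraph {v : A.V // Fml.Sat A I.ν ![v]} where
  Adj u v := Fml.Sat A I.η ![u.1, v.1]
  symm := ⟨fun u v h => I.symm A u.1 v.1 h⟩
  loopless := ⟨fun v h => I.irrefl A v.1 h⟩

/-- The `k`-copy operation on graphs: the copies of a vertex form a clique, and copies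
with the same index are adjacent iff the original vertices are. -/
def copyGraph {V : Type} (G : SimpleGraph V) (k : ℕ) : SimpleGraph (V × Fin k) where
  Adj a b := (a.1 = b.1 ∧ a.2 ≠ b.2) ∨ (G.Adj a.1 b.1 ∧ a.2 = b.2)
  symm := by
    constructor
    rintro a b (⟨h1, h2⟩ | ⟨h1, h2⟩)
    · exact Or.inl ⟨h1.symm, h2.symm⟩
    · exact Or.inr ⟨h1.symm, h2.symm⟩
  loopless := by
    constructor
    rintro a (⟨_, h⟩ | ⟨h, _⟩)
    · exact h rfl
    · exact G.irrefl h

/-- The `k`-copy operation on finite graphs. -/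
def FGraph.copy (G : FGraph) (k : ℕ) : FGraph where
  V := G.V × Fin k
  G := copyGraph G.G k

/-- A transduction: a composition `I ∘ Γ_𝒰 ∘ C_k` of a copy operation, a coloring
operation and a simple interpretation. -/
structure Transduction where
  k : ℕ
  kpos : 0 < k
  c : ℕ
  I : Interp c

/-- The colored graph obtained from `C_k(G)` by a choice of coloring. -/
def Transduction.copyCGraph (T : Transduction) (G : FGraph)
    (color : Fin T.c → Set (G.V × Fin T.k)) : CGraph T.c where
  V := G.V × Fin T.k
  G := copyGraph G.G T.k
  color := color

/-- `H ∈ T(G)` (up to isomorphism). -/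
def Transduction.mem (T : Transduction) (G H : FGraph) : Prop :=
  ∃ color : Fin T.c → Set (G.V × Fin T.k),
    Nonempty (H.G ≃g T.I.result (T.copyCGraph G color))

/-- The image `T(𝒟)` of a class of graphs under a transduction. -/
def TImage (T : Transduction) (D : Set FGraph) : Set FGraph :=
  {H | ∃ G ∈ D, T.mem G H}

/-- `𝒞 ⊑_FO 𝒟` : `𝒞` is a first-order transduction of `𝒟`. -/
def SqFO (C D : Set FGraph) : Prop := ∃ T : Transduction, C ⊆ TImage T D

/-- `𝒞 ⊑°_FO 𝒟` : `𝒞` is a non-copying first-order transduction of `𝒟`. -/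
def SqFOnc (C D : Set FGraph) : Prop := ∃ T : Transduction, T.k = 1 ∧ C ⊆ TImage T D

/-- `𝒞 ≡_FO 𝒟`. -/
def EquivFO (C D : Set FGraph) : Prop := SqFO C D ∧ SqFO D C

/-- `T'` subsumes `T` : `T'(G) ⊇ T(G)` for every graph `G`. -/
def Subsumes (T' T : Transduction) : Prop := ∀ G H : FGraph, T.mem G H → T'.mem G H

/-! ### Perturbations -/

/-- The subset complementation `⊕M`: complement the adjacency between distinct
vertices that both belong to `M`. -/
def scompGraph {V : Type} (G : SimpleGraph V) (M : Set V) : SimpleGraph V where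
  Adj u v := u ≠ v ∧ (G.Adj u v ↔ ¬(u ∈ M ∧ v ∈ M))
  symm := by
    constructor
    rintro u v ⟨h1, h2⟩
    refine ⟨h1.symm, ?_, ?_⟩
    · intro h hm
      exact (h2.mp (G.adj_symm h)) ⟨hm.2, hm.1⟩
    · intro h
      exact G.adj_symm (h2.mpr fun hm => h ⟨hm.2, hm.1⟩)
  loopless := ⟨fun v h => h.1 rfl⟩

/-- Applying a finite sequence of subset complementations. -/
def perturbGraph {V : Type} : List (Set V) → SimpleGraph V → SimpleGraph V
  | [], G => G
  | M :: Ms, G => perturbGraph Ms (scompGraph G M)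

/-- `H ∈ P(G)` for a perturbation `P` that is the composition of `p` subset
complementations (up to isomorphism). -/
def PerturbMem (p : ℕ) (G H : FGraph) : Prop :=
  ∃ Z : Fin p → Set G.V, Nonempty (H.G ≃g perturbGraph (List.ofFn Z) G.G)

/-- The image `P(𝒟)` of a class under a perturbation with `p` marks. -/
def PerturbImage (p : ℕ) (D : Set FGraph) : Set FGraph :=
  {H | ∃ G ∈ D, PerturbMem p G H}

/-- `𝒞` is a perturbation of `𝒟`. -/
def IsPerturbationOfClass (C D : Set FGraph) : Prop := ∃ p, C ⊆ PerturbImage p D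

/-! ### Locality -/

/-- The ball of radius `r` around a set `S` of vertices. -/
def ballSet {V : Type} (G : SimpleGraph V) (r : ℕ) (S : Set V) : Set V :=
  {v | ∃ u ∈ S, G.Reachable u v ∧ G.dist u v ≤ r}

lemma mem_ballSet_self {V : Type} (G : SimpleGraph V) (r : ℕ) {S : Set V} {v : V}
    (hv : v ∈ S) : v ∈ ballSet G r S :=
  ⟨v, hv, Reachable.refl v, by rw [SimpleGraph.dist_self]; exact Nat.zero_le r⟩

/-- The colored subgraph induced on a set of vertices. -/
def CGraph.induce {c : ℕ} (A : CGraph c) (S : Set A.V) : CGraph c where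
  V := ↥S
  G := A.G.induce S
  color := fun i => {v | (v : A.V) ∈ A.color i}

/-- A formula is `r`-local if its truth only depends on the subgraph induced by the
ball of radius `r` around its free variables. -/
def IsLocalFml {c m : ℕ} (r : ℕ) (φ : Fml c m) : Prop :=
  ∀ (A : CGraph c) (v : Fin m → A.V),
    Fml.Sat A φ v ↔
      Fml.Sat (A.induce (ballSet A.G r (Set.range v))) φ
        (fun i => ⟨v i, mem_ballSet_self A.G r (Set.mem_range_self i)⟩)

/-- A formula is strongly `r`-local if it is `r`-local and, whenever it holds of a
tuple, the entries of the tuple are pairwise at distance at most `r`. -/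
def IsStronglyLocalFml {c m : ℕ} (r : ℕ) (φ : Fml c m) : Prop :=
  IsLocalFml r φ ∧
    ∀ (A : CGraph c) (v : Fin m → A.V), Fml.Sat A φ v →
      ∀ i j : Fin m, A.G.Reachable (v i) (v j) ∧ A.G.dist (v i) (v j) ≤ r

/-- An immersive transduction: non-copying, with strongly local formulas. -/
def Transduction.Immersive (T : Transduction) : Prop :=
  T.k = 1 ∧ ∃ r : ℕ, IsStronglyLocalFml r T.I.ν ∧ IsStronglyLocalFml r T.I.η

/-! ### Graph classes -/

/-- A set of graphs closed under isomorphism. -/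
def IsoClosed (C : Set FGraph) : Prop :=
  ∀ G H : FGraph, Nonempty (G.G ≃g H.G) → G ∈ C → H ∈ C

/-- `H` is (isomorphic to) an induced subgraph of `G`. -/
def IsInducedSubgraphOf (H G : FGraph) : Prop :=
  ∃ f : H.V → G.V, Function.Injective f ∧ ∀ u v, H.G.Adj u v ↔ G.G.Adj (f u) (f v)

/-- A hereditary class: closed under induced subgraphs. -/
def HereditaryClass (C : Set FGraph) : Prop :=
  ∀ G ∈ C, ∀ H : FGraph, IsInducedSubgraphOf H G → H ∈ C

/-- `H` is (isomorphic to) a subgraph of `G`. -/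
def IsSubgraphOf (H G : FGraph) : Prop :=
  ∃ f : H.V → G.V, Function.Injective f ∧ ∀ u v, H.G.Adj u v → G.G.Adj (f u) (f v)

/-- The monotone closure of a class: all subgraphs of its members. -/
def monotoneClosure (C : Set FGraph) : Set FGraph :=
  {H | ∃ G ∈ C, IsSubgraphOf H G}

/-- `G` contains `K_{t,t}` as a subgraph. -/
def HasKtt {V : Type} (G : SimpleGraph V) (t : ℕ) : Prop :=
  ∃ a b : Fin t → V, Function.Injective a ∧ Function.Injective b ∧
    (∀ i j, a i ≠ b j) ∧ ∀ i j, G.Adj (a i) (b j)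

/-- A weakly sparse class: some `K_{t,t}` is a subgraph of no member. -/
def WeaklySparse (C : Set FGraph) : Prop := ∃ t : ℕ, ∀ G ∈ C, ¬ HasKtt G.G t

/-- Disjoint union of two graphs. -/
def sumGraph {V W : Type} (G : SimpleGraph V) (H : SimpleGraph W) : SimpleGraph (V ⊕ W) where
  Adj a b := match a, b with
    | .inl u, .inl v => G.Adj u v
    | .inr u, .inr v => H.Adj u v
    | _, _ => False
  symm := by
    constructor
    rintro (u | u) (v | v) h
    · exact G.adj_symm h
    · exact h.elim
    · exact h.elim
    · exact H.adj_symm h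
  loopless := by
    constructor
    rintro (v | v) h
    · exact G.irrefl h
    · exact H.irrefl h

/-- Disjoint union of finite graphs. -/
def FGraph.disjUnion (G H : FGraph) : FGraph where
  V := G.V ⊕ H.V
  G := sumGraph G.G H.G

/-- An addable class: closed under disjoint unions. -/
def Addable (C : Set FGraph) : Prop :=
  ∀ G ∈ C, ∀ H ∈ C, FGraph.disjUnion G H ∈ C

/-- The degree of a vertex. -/
noncomputable def degCard (G : FGraph) (v : G.V) : ℕ := Nat.card {u : G.V // G.G.Adj v u}

/-- A class with bounded maximum degree. -/
def BddDegree (C : Set FGraph) : Prop := ∃ D : ℕ, ∀ G ∈ C, ∀ v : G.V, degCard G v ≤ D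
/-! ### Further graph constructions and parameters -/

/-- Auxiliary instance. -/
instance {α : Type} [Finite α] : Finite (Option α) :=
  Finite.of_equiv _ (Equiv.optionEquivSumPUnit.{0,0} α).symm

/-- Adding an apex vertex adjacent to all vertices. -/
def apexGraph {V : Type} (G : SimpleGraph V) : SimpleGraph (Option V) where
  Adj a b := match a, b with
    | none, none => False
    | none, some _ => True
    | some _, none => True
    | some u, some v => G.Adj u v
  symm := by
    constructor
    rintro (_ | u) (_ | v) h
    · exact h.elim
    · trivial
    · trivial
    · exact G.adj_symm h
  loopless := by
    constructor
    rintro (_ | v) h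
    · exact h.elim
    · exact G.irrefl h

/-- The class `𝒞 ∨ K₁` of graphs of `𝒞` with an added apex. -/
def JoinK1 (C : Set FGraph) : Set FGraph :=
  {H | ∃ G ∈ C, Nonempty (H.G ≃g apexGraph G.G)}

/-- The ball of radius `r` around a vertex, as a finite graph. -/
def ballFGraph (G : FGraph) (r : ℕ) (v : G.V) : FGraph where
  V := ↥(ballSet G.G r {v})
  G := G.G.induce (ballSet G.G r {v})

/-- The class `𝓛_r(ℱ)` of all balls of radius `r` of graphs of `ℱ`. -/
def LocClass (r : ℕ) (F : Set FGraph) : Set FGraph :=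
  {H | ∃ G ∈ F, ∃ v : G.V, Nonempty (H.G ≃g (ballFGraph G r v).G)}

/-- Adding a pendant vertex adjacent only to `v`. -/
def pendantGraph {V : Type} (G : SimpleGraph V) (v : V) : SimpleGraph (Option V) where
  Adj a b := match a, b with
    | none, none => False
    | none, some w => w = v
    | some u, none => u = v
    | some u, some w => G.Adj u w
  symm := by
    constructor
    rintro (_ | u) (_ | w) h
    · exact h.elim
    · exact h
    · exact h
    · exact G.adj_symm h
  loopless := by
    constructor
    rintro (_ | w) h
    · exact h.elim
    · exact G.irrefl h

/-- The finite graph obtained by adding a pendant vertex at `v`. -/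
def FGraph.addPendant (G : FGraph) (v : G.V) : FGraph where
  V := Option G.V
  G := pendantGraph G.G v

/-- `G` is obtained from `H` by adding at most `h` vertices, joined arbitrarily. -/
def NearlyOf (h : ℕ) (G H : FGraph) : Prop :=
  ∃ f : H.V → G.V, Function.Injective f ∧
    (∀ u v, H.G.Adj u v ↔ G.G.Adj (f u) (f v)) ∧
    Nat.card {v : G.V // v ∉ Set.range f} ≤ h

/-- The class `𝒞` is nearly `𝒟`. -/
def Nearly (C D : Set FGraph) : Prop :=
  ∃ h : ℕ, ∀ G ∈ C, ∃ H ∈ D, NearlyOf h G H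

/-- The class `ℰ` of all edgeless graphs. -/
def EdgelessClass : Set FGraph := {G | ∀ u v : G.V, ¬ G.G.Adj u v}

/-- All members of the class have connected components of bounded size. -/
def BddComponents (D : Set FGraph) : Prop :=
  ∃ n : ℕ, ∀ G ∈ D, ∀ v : G.V, Nat.card {u : G.V // G.G.Reachable v u} ≤ n

/-- The class of all cubic (3-regular) graphs. -/
def CubicClass : Set FGraph := {G | ∀ v : G.V, degCard G v = 3}

/-- The class `𝒫` of all paths. -/
def PathClass : Set FGraph :=
  {G | ∃ n : ℕ, Nonempty (G.G ≃g SimpleGraph.pathGraph n)}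

/-- The `ℓ`-th power of a graph: two vertices are adjacent iff their distance
is between `1` and `ℓ`. -/
def powGraph {V : Type} (G : SimpleGraph V) (ℓ : ℕ) : SimpleGraph V where
  Adj u v := u ≠ v ∧ G.Reachable u v ∧ G.dist u v ≤ ℓ
  symm := by
    constructor
    rintro u v ⟨h1, h2, h3⟩
    exact ⟨h1.symm, h2.symm, by rwa [SimpleGraph.dist_comm]⟩
  loopless := ⟨fun v h => h.1 rfl⟩

/-- The bandwidth of `G` is at most `ℓ` : `G` is a subgraph of the `ℓ`-th power
of a path. -/
def BandwidthLE (G : FGraph) (ℓ : ℕ) : Prop :=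
  ∃ n : ℕ, ∃ f : G.V → Fin n, Function.Injective f ∧
    ∀ u v, G.G.Adj u v → (powGraph (SimpleGraph.pathGraph n) ℓ).Adj (f u) (f v)

/-- A class with bounded bandwidth. -/
def BddBandwidth (D : Set FGraph) : Prop := ∃ ℓ : ℕ, ∀ G ∈ D, BandwidthLE G ℓ

/-- The class of all cubic trees: trees all of whose vertices have degree 3 or 1. -/
def CubicTreeClass : Set FGraph :=
  {G | G.G.IsTree ∧ ∀ v : G.V, degCard G v = 3 ∨ degCard G v = 1}

/-- `H` contains a clique on `s` vertices. -/
def HasCliqueN {V : Type} (H : SimpleGraph V) (s : ℕ) : Prop :=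
  ∃ f : Fin s → V, Function.Injective f ∧ ∀ i j, i ≠ j → H.Adj (f i) (f j)

/-- A chordal graph: no induced cycle of length at least 4. -/
def IsChordal {V : Type} (H : SimpleGraph V) : Prop :=
  ∀ n : ℕ, 4 ≤ n → ¬ ∃ f : Fin n → V, Function.Injective f ∧
    ∀ i j, (SimpleGraph.cycleGraph n).Adj i j ↔ H.Adj (f i) (f j)

/-- `tw(G) ≤ n` : `G` is a subgraph of a chordal graph with clique number at most `n+1`. -/
def TreewidthLE (G : FGraph) (n : ℕ) : Prop :=
  ∃ H : SimpleGraph G.V, IsChordal H ∧ G.G ≤ H ∧ ¬ HasCliqueN H (n + 2)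

/-- A class with bounded treewidth. -/
def BddTreewidth (D : Set FGraph) : Prop := ∃ n : ℕ, ∀ G ∈ D, TreewidthLE G n

/-- An interval graph: the intersection graph of a family of real intervals. -/
def IsIntervalGraph {V : Type} (H : SimpleGraph V) : Prop :=
  ∃ l r : V → ℝ, (∀ v, l v ≤ r v) ∧
    ∀ u v, u ≠ v → (H.Adj u v ↔ (l u ≤ r v ∧ l v ≤ r u))

/-- `pw(G) ≤ n` : `G` is a subgraph of an interval graph with clique number at
most `n+1`. -/
def PathwidthLE (G : FGraph) (n : ℕ) : Prop :=
  ∃ H : SimpleGraph G.V, IsIntervalGraph H ∧ G.G ≤ H ∧ ¬ HasCliqueN H (n + 2)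

/-- The class `𝒫𝒲_n` of all graphs of pathwidth at most `n`. -/
def PWClass (n : ℕ) : Set FGraph := {G | PathwidthLE G n}

/-- `G` is a forest of depth at most `n` : it is acyclic and roots may be chosen,
one in each connected component, such that every vertex is at distance at most
`n - 1` from the root of its component. -/
def ForestDepthLE (n : ℕ) (G : FGraph) : Prop :=
  G.G.IsAcyclic ∧ ∃ ρ : G.V → G.V,
    (∀ v, G.G.Reachable (ρ v) v ∧ G.G.dist (ρ v) v ≤ n - 1) ∧
    ∀ u v, G.G.Reachable u v → ρ u = ρ v

/-- The class `𝒯_n` of forests of depth at most `n`. -/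
def TreeDepthClass (n : ℕ) : Set FGraph := {G | ForestDepthLE n G}

/-- A star forest: an acyclic graph with no path on four distinct vertices. -/
def IsStarForest (G : FGraph) : Prop :=
  G.G.IsAcyclic ∧ ∀ a b c d : G.V, G.G.Adj a b → G.G.Adj b c → G.G.Adj c d →
    a = c ∨ b = d ∨ a = d

/-- The class `𝒯₂` of all star forests. -/
def StarForestClass : Set FGraph := {G | IsStarForest G}

/-- `H` is a depth-`r` shallow minor of `G` : it is obtained by contracting
pairwise disjoint connected subgraphs of radius at most `r` and deleting
vertices and edges. -/
def IsShallowMinor (r : ℕ) (H G : FGraph) : Prop :=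
  ∃ φ : H.V → Set G.V,
    (∀ v, (φ v).Nonempty) ∧
    (∀ u v, u ≠ v → Disjoint (φ u) (φ v)) ∧
    (∀ v : H.V, ∃ c : ↥(φ v), ∀ u : ↥(φ v),
      (G.G.induce (φ v)).Reachable c u ∧ (G.G.induce (φ v)).dist c u ≤ r) ∧
    (∀ u v : H.V, H.G.Adj u v → ∃ a ∈ φ u, ∃ b ∈ φ v, G.G.Adj a b)

/-- The average degree of `H` is at most `d`. -/
def AvgDegLE (H : FGraph) (d : ℕ) : Prop :=
  2 * Nat.card H.G.edgeSet ≤ d * Nat.card H.V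

/-- A class of bounded expansion: for some `f : ℕ → ℕ`, every depth-`r` shallow
minor of a member has average degree at most `f r`. -/
def BoundedExpansion (C : Set FGraph) : Prop :=
  ∃ f : ℕ → ℕ, ∀ r : ℕ, ∀ G ∈ C, ∀ H : FGraph, IsShallowMinor r H G → AvgDegLE H (f r)

/-- A proper coloring `f` of `G` with `n` colors is a star coloring if no path on
four vertices receives only two colors. -/
def IsStarColoring {V : Type} (G : SimpleGraph V) (n : ℕ) (f : V → Fin n) : Prop :=
  (∀ u v, G.Adj u v → f u ≠ f v) ∧
  ∀ a b c d, G.Adj a b → G.Adj b c → G.Adj c d → a ≠ c → b ≠ d → a ≠ d →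
    ¬ (f a = f c ∧ f b = f d)

/-- A class with bounded star chromatic number. -/
def BddStarChrom (C : Set FGraph) : Prop :=
  ∃ n : ℕ, ∀ G ∈ C, ∃ f : G.V → Fin n, IsStarColoring G.G n f


/-!
Suppose no transduction produces all graphs from `ℬ`. Enumerate the transductions as
`T₀, T₁, …` and let `Tₙ'` be `Tₙ` followed by decoding an `(n+1)`-subdivision: mark the branch
vertices by a new color and join two of them when a path through exactly `n + 1` unmarked
vertices links them. Pick `Hₙ ∉ Tₙ'(ℬ)`. The `(n+1)`-subdivisions of the `Hₙ` form a class of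
bounded expansion: in a depth-`r` shallow minor of an `s`-subdivision with `s ≥ 4r + 2`, branch
sets containing branch vertices are pairwise far apart, and every other branch set is a segment
of a subdivided edge with at most two neighbours, so the average degree is at most `4`; only
finitely many `n` have `n + 1 < 4r + 2`. Hence this class is contained in `Tₘ(ℬ)` for some `m`,
and then `Hₘ ∈ Tₘ'(ℬ)`.
-/

namespace Fml

variable {c : ℕ}

def and {m : ℕ} (φ ψ : Fml c m) : Fml c m := .not ((Fml.not φ).or (.not ψ))

@[simp]
lemma sat_and {A : CGraph c} {m : ℕ} {φ ψ : Fml c m} {v : Fin m → A.V} :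
    Sat A (φ.and ψ) v ↔ Sat A φ v ∧ Sat A ψ v := by
  simp [Fml.and, Sat]

def rename : {m m' : ℕ} → Fml c m → (Fin m → Fin m') → Fml c m'
  | _, _, .eq i j, f => .eq (f i) (f j)
  | _, _, .adj i j, f => .adj (f i) (f j)
  | _, _, .col i x, f => .col i (f x)
  | _, _, .not φ, f => .not (φ.rename f)
  | _, _, .or φ ψ, f => .or (φ.rename f) (ψ.rename f)
  | _, _, .ex φ, f => .ex (φ.rename (Fin.snoc (fun j => (f j).castSucc) (Fin.last _)))

lemma sat_rename {A : CGraph c} : ∀ {m m' : ℕ} (φ : Fml c m) (f : Fin m → Fin m')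
    (v : Fin m' → A.V), Sat A (φ.rename f) v ↔ Sat A φ (v ∘ f)
  | _, _, .eq _ _, _, _ => Iff.rfl
  | _, _, .adj _ _, _, _ => Iff.rfl
  | _, _, .col _ _, _, _ => Iff.rfl
  | _, _, .not φ, f, v => by simp only [rename, Sat, sat_rename φ f v]
  | _, _, .or φ ψ, f, v => by simp only [rename, Sat, sat_rename φ f v, sat_rename ψ f v]
  | _, _, .ex φ, f, v => by
      simp only [rename, Sat]
      refine exists_congr fun w => ?_
      rw [sat_rename φ _ (Fin.snoc v w)]
      have : Fin.snoc v w ∘ Fin.snoc (fun j => (f j).castSucc) (Fin.last _) =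
          Fin.snoc (v ∘ f) w := by
        funext i
        refine Fin.lastCases ?_ (fun j => ?_) i <;> simp
      rw [this]

def recolor {c' : ℕ} (g : Fin c → Fin c') : {m : ℕ} → Fml c m → Fml c' m
  | _, .eq i j => .eq i j
  | _, .adj i j => .adj i j
  | _, .col i x => .col (g i) x
  | _, .not φ => .not (φ.recolor g)
  | _, .or φ ψ => .or (φ.recolor g) (ψ.recolor g)
  | _, .ex φ => .ex (φ.recolor g)

end Fml

def CGraph.comapColor {c c' : ℕ} (A : CGraph c') (g : Fin c → Fin c') : CGraph c :=
  { V := A.V, G := A.G, color := A.color ∘ g }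

abbrev CGraph.addColor {c : ℕ} (A : CGraph c) (M : Set A.V) : CGraph (c + 1) :=
  { V := A.V, G := A.G, color := Fin.snoc A.color M }

lemma Fml.sat_recolor {c c' : ℕ} {A : CGraph c'} (g : Fin c → Fin c') :
    ∀ {m : ℕ} (φ : Fml c m) (v : Fin m → A.V), Sat A (φ.recolor g) v ↔ Sat (A.comapColor g) φ v
  | _, .eq _ _, _ => Iff.rfl
  | _, .adj _ _, _ => Iff.rfl
  | _, .col _ _, _ => Iff.rfl
  | _, .not φ, v => by simp only [recolor, Sat, sat_recolor g φ v]
  | _, .or φ ψ, v => by simp only [recolor, Sat, sat_recolor g φ v, sat_recolor g ψ v]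
  | _, .ex φ, v => exists_congr fun w => sat_recolor g φ (Fin.snoc v w)

lemma Fml.sat_recolor_castSucc_addColor {c : ℕ} {A : CGraph c} {M : Set A.V} {m : ℕ}
    (φ : Fml c m) (v : Fin m → A.V) :
    Sat (A.addColor M) (φ.recolor Fin.castSucc) v ↔ Sat A φ v := by
  rw [sat_recolor]
  show Sat { A with color := Fin.snoc A.color M ∘ Fin.castSucc } φ v ↔ _
  rw [Fin.snoc_comp_castSucc]

def chainRel {α : Type*} (E : α → α → Prop) (P : α → Prop) : ℕ → α → α → Prop
  | 0, u, v => E u v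
  | n + 1, u, v => ∃ z, E u z ∧ P z ∧ chainRel E P n z v

namespace chainRel

variable {α β : Type*} {E : α → α → Prop} {P : α → Prop}

lemma snoc : ∀ {n : ℕ} {u v w : α}, chainRel E P n u v → P v → E v w → chainRel E P (n + 1) u w
  | 0, _, v, _, h, hv, hvw => ⟨v, h, hv, hvw⟩
  | _ + 1, _, _, _, ⟨z, huz, hz, hc⟩, hv, hvw => ⟨z, huz, hz, hc.snoc hv hvw⟩

lemma symm (hE : ∀ a b, E a b → E b a) :
    ∀ {n : ℕ} {u v : α}, chainRel E P n u v → chainRel E P n v u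
  | 0, _, _, h => hE _ _ h
  | _ + 1, _, _, ⟨_, huz, hz, hc⟩ => (hc.symm hE).snoc hz (hE _ _ huz)

lemma map_iff {E' : β → β → Prop} {P' : β → Prop} {f : α → β}
    (hE : ∀ a b, E' (f a) (f b) ↔ E a b) (hP : ∀ z, P' z ↔ ∃ a, P a ∧ f a = z) :
    ∀ (n : ℕ) (a b : α), chainRel E' P' n (f a) (f b) ↔ chainRel E P n a b
  | 0, a, b => hE a b
  | n + 1, a, b => by
    constructor
    · rintro ⟨z, haz, hz, hc⟩
      obtain ⟨y, hy, rfl⟩ := (hP z).mp hz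
      exact ⟨y, (hE a y).mp haz, hy, (map_iff hE hP n y b).mp hc⟩
    · rintro ⟨z, haz, hz, hc⟩
      exact ⟨f z, (hE a z).mpr haz, (hP _).mpr ⟨z, hz, rfl⟩, (map_iff hE hP n z b).mpr hc⟩

end chainRel

/-- The formula `η(x, y)` for `n = 0`, and `∃ z, η(x, z) ∧ ν(z) ∧ ¬ mark(z) ∧ chain n (z, y)`
otherwise. -/
def Fml.chain {c : ℕ} (η : Fml c 2) (ν : Fml c 1) (mark : Fin c) : ℕ → Fml c 2
  | 0 => η
  | n + 1 => .ex ((η.rename ![0, 2]).and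
      (((ν.rename ![2]).and (.not (.col mark 2))).and ((Fml.chain η ν mark n).rename ![2, 1])))

lemma Fml.sat_chain {c : ℕ} {A : CGraph c} (η : Fml c 2) (ν : Fml c 1) (mark : Fin c) :
    ∀ (n : ℕ) (u v : A.V), Sat A (η.chain ν mark n) ![u, v] ↔
      chainRel (fun a b => Sat A η ![a, b]) (fun z => Sat A ν ![z] ∧ z ∉ A.color mark) n u v
  | 0, _, _ => Iff.rfl
  | n + 1, u, v => by
    simp only [chain, Sat, sat_and, sat_rename, chainRel]
    refine exists_congr fun w => ?_
    have h02 : (Fin.snoc ![u, v] w ∘ ![0, 2] : Fin 2 → A.V) = ![u, w] := by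
      funext i; fin_cases i <;> rfl
    have h2 : (Fin.snoc ![u, v] w ∘ ![2] : Fin 1 → A.V) = ![w] := by
      funext i; fin_cases i; rfl
    have h21 : (Fin.snoc ![u, v] w ∘ ![2, 1] : Fin 2 → A.V) = ![w, v] := by
      funext i; fin_cases i <;> rfl
    rw [h02, h2, h21, sat_chain η ν mark n w v]
    rfl

namespace SimpleGraph

variable {V : Type} {G : SimpleGraph V}

instance [Finite V] : Finite G.Dart := Finite.of_injective _ Dart.toProd_injective

lemma natCard_dart [Finite V] : Nat.card G.Dart = 2 * Nat.card G.edgeSet := by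
  classical
  have := Fintype.ofFinite V
  rw [Nat.card_eq_fintype_card, dart_card_eq_twice_card_edges, edgeFinset_card,
    Nat.card_eq_fintype_card]

lemma two_mul_natCard_edgeSet_le [Finite V] :
    2 * Nat.card G.edgeSet ≤ Nat.card V * Nat.card V := by
  rw [← natCard_dart, ← Nat.card_prod]
  exact Nat.card_le_card_of_injective _ Dart.toProd_injective

/-- Each edge has an endpoint in `P`, and is charged to that endpoint together with the label
of the other one. -/
lemma two_mul_natCard_edgeSet_le_of_cover [Finite V] (P : V → Prop)
    (hcover : ∀ u v, G.Adj u v → P u ∨ P v)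
    (hlabel : ∀ u, P u → ∃ f : V → Fin 2, Set.InjOn f (G.neighborSet u)) :
    2 * Nat.card G.edgeSet ≤ 4 * Nat.card V := by
  classical
  choose f hf using hlabel
  have hcover' : ∀ d : G.Dart, ¬ P d.fst → P d.snd := fun d h => (hcover _ _ d.adj).resolve_left h
  let F : G.Dart → (V × Fin 2) × Fin 2 := fun d =>
    if h : P d.fst then ((d.fst, f _ h d.snd), 0) else ((d.snd, f _ (hcover' d h) d.fst), 1)
  have hF : Function.Injective F := by
    rintro ⟨⟨u₁, v₁⟩, h₁⟩ ⟨⟨u₂, v₂⟩, h₂⟩ hF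
    simp only [F] at hF
    split_ifs at hF with hu₁ hu₂ hu₂ <;> simp only [Prod.mk.injEq] at hF
    · obtain ⟨⟨rfl, hl⟩, -⟩ := hF
      obtain rfl := hf _ hu₁ h₁ h₂ hl
      rfl
    · exact absurd hF.2 (by decide)
    · exact absurd hF.2 (by decide)
    · obtain ⟨⟨rfl, hl⟩, -⟩ := hF
      obtain rfl := hf _ _ h₁.symm h₂.symm hl
      rfl
  calc 2 * Nat.card G.edgeSet = Nat.card G.Dart := natCard_dart.symm
    _ ≤ Nat.card ((V × Fin 2) × Fin 2) := Nat.card_le_card_of_injective F hF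
    _ = 4 * Nat.card V := by rw [Nat.card_prod, Nat.card_prod, Nat.card_fin]; ring

lemma Reachable.dist_map_le {W : Type} {G' : SimpleGraph W} (f : G →g G') {u v : V}
    (h : G.Reachable u v) : G'.dist (f u) (f v) ≤ G.dist u v := by
  obtain ⟨p, hp⟩ := h.exists_walk_length_eq_dist
  exact hp ▸ (dist_le (p.map f)).trans_eq (Walk.length_map f p)

lemma Walk.le_length_add {f : V → ℕ} (hf : ∀ a b, G.Adj a b → f a ≤ f b + 1) :
    ∀ {u v : V} (p : G.Walk u v), f u ≤ p.length + f v
  | _, _, .nil => by simp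
  | _, _, .cons h p => by
    have := hf _ _ h
    have := p.le_length_add hf
    simp only [Walk.length_cons]
    omega

end SimpleGraph

structure IsShallowMinorModel (r : ℕ) (H G : FGraph) (φ : H.V → Set G.V) : Prop where
  nonempty : ∀ v, (φ v).Nonempty
  disjoint : ∀ u v, u ≠ v → Disjoint (φ u) (φ v)
  radius : ∀ v : H.V, ∃ c : ↥(φ v), ∀ u : ↥(φ v),
    (G.G.induce (φ v)).Reachable c u ∧ (G.G.induce (φ v)).dist c u ≤ r
  adj : ∀ u v, H.G.Adj u v → ∃ a ∈ φ u, ∃ b ∈ φ v, G.G.Adj a b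

lemma isShallowMinor_iff {r : ℕ} {H G : FGraph} :
    IsShallowMinor r H G ↔ ∃ φ, IsShallowMinorModel r H G φ :=
  ⟨fun ⟨φ, h₁, h₂, h₃, h₄⟩ => ⟨φ, h₁, h₂, h₃, h₄⟩, fun ⟨φ, h₁, h₂, h₃, h₄⟩ => ⟨φ, h₁, h₂, h₃, h₄⟩⟩

namespace IsShallowMinorModel

variable {r : ℕ} {H G : FGraph} {φ : H.V → Set G.V}

lemma exists_walk_length_le (hφ : IsShallowMinorModel r H G φ) {y : H.V} {a b : G.V}
    (ha : a ∈ φ y) (hb : b ∈ φ y) : ∃ p : G.G.Walk a b, p.length ≤ 2 * r := by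
  obtain ⟨c, hc⟩ := hφ.radius y
  obtain ⟨p, hp⟩ := (hc ⟨a, ha⟩).1.exists_walk_length_eq_dist
  obtain ⟨q, hq⟩ := (hc ⟨b, hb⟩).1.exists_walk_length_eq_dist
  refine ⟨(p.reverse.append q).map (SimpleGraph.Embedding.induce _).toHom,
    (SimpleGraph.Walk.length_map _ _).trans_le ?_⟩
  rw [SimpleGraph.Walk.length_append, SimpleGraph.Walk.length_reverse]
  have := (hc ⟨a, ha⟩).2
  have := (hc ⟨b, hb⟩).2
  omega

lemma preconnected (hφ : IsShallowMinorModel r H G φ) (y : H.V) :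
    (G.G.induce (φ y)).Preconnected := fun a b => by
  obtain ⟨c, hc⟩ := hφ.radius y
  exact (hc a).1.symm.trans (hc b).1

lemma natCard_le (hφ : IsShallowMinorModel r H G φ) : Nat.card H.V ≤ Nat.card G.V := by
  choose a ha using hφ.nonempty
  refine Nat.card_le_card_of_injective a fun u v h => ?_
  by_contra huv
  exact Set.disjoint_left.mp (hφ.disjoint u v huv) (ha u) (h ▸ ha v)

lemma map_iso {G' : FGraph} (hφ : IsShallowMinorModel r H G φ) (e : G.G ≃g G'.G) :
    IsShallowMinorModel r H G' fun v => e '' φ v where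
  nonempty v := (hφ.nonempty v).image _
  disjoint u v huv := Set.disjoint_image_of_injective e.injective (hφ.disjoint u v huv)
  radius v := by
    let e' := e.induce (e.injective.injOn.bijOn_image (s := φ v))
    obtain ⟨c, hc⟩ := hφ.radius v
    refine ⟨e' c, fun u => ?_⟩
    obtain ⟨u, rfl⟩ := e'.surjective u
    exact ⟨(hc u).1.map e'.toHom, ((hc u).1.dist_map_le e'.toHom).trans (hc u).2⟩
  adj u v huv := by
    obtain ⟨a, ha, b, hb, hab⟩ := hφ.adj u v huv
    exact ⟨e a, Set.mem_image_of_mem _ ha, e b, Set.mem_image_of_mem _ hb, e.map_adj_iff.mpr hab⟩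

end IsShallowMinorModel

lemma AvgDegLE.mono {H : FGraph} {d d' : ℕ} (h : AvgDegLE H d) (hd : d ≤ d') : AvgDegLE H d' :=
  h.trans (Nat.mul_le_mul_right _ hd)

lemma IsShallowMinor.avgDegLE_natCard {r : ℕ} {H G : FGraph} (h : IsShallowMinor r H G) :
    AvgDegLE H (Nat.card G.V) := by
  obtain ⟨φ, hφ⟩ := isShallowMinor_iff.mp h
  exact SimpleGraph.two_mul_natCard_edgeSet_le.trans (Nat.mul_le_mul_right _ hφ.natCard_le)

/-- Every dart, not every edge, gets its own path of `s` interior vertices: this avoids choosing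
orientations, and yields the `s`-subdivision of `H` with each edge doubled. -/
abbrev SubdivVert (H : FGraph) (s : ℕ) : Type := H.V ⊕ (H.G.Dart × Fin s)

def subdivAdj (H : FGraph) (s : ℕ) : SubdivVert H s → SubdivVert H s → Prop
  | .inl _, .inl _ => False
  | .inl u, .inr (d, i) => (u = d.fst ∧ i.val = 0) ∨ (u = d.snd ∧ i.val + 1 = s)
  | .inr (d, i), .inl v => (v = d.fst ∧ i.val = 0) ∨ (v = d.snd ∧ i.val + 1 = s)
  | .inr (d, i), .inr (e, j) => d = e ∧ (i.val + 1 = j.val ∨ j.val + 1 = i.val)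

def subdivGraph (H : FGraph) (s : ℕ) : SimpleGraph (SubdivVert H s) where
  Adj := subdivAdj H s
  symm := by
    constructor
    rintro (u | ⟨d, i⟩) (v | ⟨e, j⟩) h <;> simp only [subdivAdj] at h ⊢ <;> tauto
  loopless := by
    constructor
    rintro (u | ⟨d, i⟩) h
    · exact h
    · rcases h with ⟨-, h | h⟩ <;> omega

abbrev FGraph.subdivision (H : FGraph) (s : ℕ) : FGraph :=
  { V := SubdivVert H s, G := subdivGraph H s }

namespace Subdivision

open Sum

variable {H : FGraph} {s : ℕ}

lemma exists_eq_inr_of_adj_inl {u : H.V} {b : SubdivVert H s}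
    (h : (subdivGraph H s).Adj (inl u) b) :
    ∃ d i, b = inr (d, i) ∧ ((u = d.fst ∧ i.val = 0) ∨ (u = d.snd ∧ i.val + 1 = s)) := by
  match b, h with
  | .inr (d, i), h => exact ⟨d, i, rfl, h⟩

lemma adj_inr_inl_iff {d : H.G.Dart} {i : Fin s} {v : H.V} :
    (subdivGraph H s).Adj (inr (d, i)) (inl v) ↔
      (v = d.fst ∧ i.val = 0) ∨ (v = d.snd ∧ i.val + 1 = s) := Iff.rfl

lemma adj_inr_inr_iff {d e : H.G.Dart} {i j : Fin s} :
    (subdivGraph H s).Adj (inr (d, i)) (inr (e, j)) ↔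
      d = e ∧ (i.val + 1 = j.val ∨ j.val + 1 = i.val) := Iff.rfl

/-! ### Decoding adjacency from paths of interior vertices -/

lemma eq_fst_or_eq_snd_of_chainRel : ∀ {n : ℕ} {d : H.G.Dart} {i : Fin s} {v : H.V},
    chainRel (subdivGraph H s).Adj (· ∉ Set.range inl) n (inr (d, i)) (inl v) →
      v = d.fst ∨ v = d.snd
  | 0, _, _, _, h => h.imp And.left And.left
  | _ + 1, _, _, _, ⟨.inl w, _, hz, _⟩ => absurd ⟨w, rfl⟩ hz
  | _ + 1, _, _, _, ⟨.inr (_, _), hadj, _, hc⟩ => by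
    obtain ⟨rfl, -⟩ := adj_inr_inr_iff.mp hadj
    exact eq_fst_or_eq_snd_of_chainRel hc

lemma chainRel_inl_inr (d : H.G.Dart) :
    ∀ (k : ℕ) (hk : k < s), chainRel (subdivGraph H s).Adj (· ∉ Set.range inl) k
      (inl d.fst) (inr (d, ⟨k, hk⟩))
  | 0, _ => Or.inl ⟨rfl, rfl⟩
  | k + 1, hk => (chainRel_inl_inr d k (by omega)).snoc (by simp) ⟨rfl, Or.inl rfl⟩

lemma adj_iff_chainRel (hs : 1 ≤ s) {u v : H.V} :
    H.G.Adj u v ↔ u ≠ v ∧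
      chainRel (subdivGraph H s).Adj (· ∉ Set.range inl) s (inl u) (inl v) := by
  obtain ⟨n, rfl⟩ : ∃ n, s = n + 1 := ⟨s - 1, by omega⟩
  constructor
  · intro h
    exact ⟨h.ne, (chainRel_inl_inr ⟨(u, v), h⟩ n (by omega)).snoc (by simp) (Or.inr ⟨rfl, rfl⟩)⟩
  · rintro ⟨hne, z, hadj, hz, hc⟩
    obtain ⟨d, i, rfl, hu⟩ := exists_eq_inr_of_adj_inl hadj
    have hv := eq_fst_or_eq_snd_of_chainRel hc
    rcases hu with ⟨rfl, -⟩ | ⟨rfl, -⟩ <;> rcases hv with rfl | rfl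
    exacts [absurd rfl hne, d.adj, d.adj.symm, absurd rfl hne]

/-! ### Branch vertices are far apart -/

open Classical in
/-- This is `min (dist x (inl v)) (s + 1)` in the subdivision. -/
noncomputable def cappedDist (v : H.V) : SubdivVert H s → ℕ
  | .inl u => if u = v then 0 else s + 1
  | .inr (d, i) => if v = d.fst then i.val + 1 else if v = d.snd then s - i.val else s + 1

lemma cappedDist_le_succ_of_adj (v : H.V) {a b : SubdivVert H s}
    (h : (subdivGraph H s).Adj a b) : cappedDist v a ≤ cappedDist v b + 1 := by
  rcases a with u | ⟨d, i⟩ <;> rcases b with w | ⟨e, j⟩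
  · exact h.elim
  · have := e.adj.ne
    rcases h with ⟨rfl, _⟩ | ⟨rfl, _⟩ <;> grind [cappedDist]
  · have := d.adj.ne
    rcases h with ⟨rfl, _⟩ | ⟨rfl, _⟩ <;> grind [cappedDist]
  · obtain ⟨rfl, _⟩ := h
    grind [cappedDist]

lemma succ_le_length_of_ne {u v : H.V} (hne : u ≠ v) (p : (subdivGraph H s).Walk (inl u) (inl v)) :
    s + 1 ≤ p.length := by
  have := p.le_length_add fun _ _ => cappedDist_le_succ_of_adj v
  simpa [cappedDist, hne] using this

/-! ### Connected sets of interior vertices -/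

def leftNb (d : H.G.Dart) (i : Fin s) : SubdivVert H s :=
  if i.val = 0 then inl d.fst else inr (d, ⟨i.val - 1, (Nat.sub_le _ _).trans_lt i.isLt⟩)

def rightNb (d : H.G.Dart) (i : Fin s) : SubdivVert H s :=
  if h : i.val + 1 = s then inl d.snd else inr (d, ⟨i.val + 1, by omega⟩)

lemma eq_leftNb_or_eq_rightNb_of_adj {d : H.G.Dart} {i : Fin s} {b : SubdivVert H s}
    (h : (subdivGraph H s).Adj (inr (d, i)) b) : b = leftNb d i ∨ b = rightNb d i := by
  rcases b with v | ⟨e, j⟩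
  · rcases adj_inr_inl_iff.mp h with ⟨rfl, hi⟩ | ⟨rfl, hi⟩
    · exact Or.inl (by simp [leftNb, hi])
    · exact Or.inr (by simp [rightNb, hi])
  · obtain ⟨rfl, hij | hij⟩ := adj_inr_inr_iff.mp h
    · right
      have : i.val + 1 ≠ s := by omega
      rw [rightNb, dif_neg this]
      congr 2
      exact Fin.ext hij.symm
    · left
      have : i.val ≠ 0 := by omega
      rw [leftNb, if_neg this]
      congr 2
      exact Fin.ext (by dsimp only; omega)

variable {X : Set (SubdivVert H s)}

lemma exists_eq_inr_of_walk (hX : ∀ w, inl w ∉ X) {p q : X}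
    (W : ((subdivGraph H s).induce X).Walk p q) {d : H.G.Dart} {i : Fin s}
    (hp : p.val = inr (d, i)) : ∃ j, q.val = inr (d, j) := by
  induction W generalizing i with
  | nil => exact ⟨i, hp⟩
  | @cons p t q hadj W ih =>
    rcases ht : t.val with w | ⟨e, j⟩
    · exact absurd (ht ▸ t.2) (hX w)
    · have hadj : (subdivGraph H s).Adj p.val t.val := hadj
      rw [hp, ht] at hadj
      obtain ⟨rfl, -⟩ := adj_inr_inr_iff.mp hadj
      exact ih ht

lemma mem_of_walk (hX : ∀ w, inl w ∉ X) {p q : X}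
    (W : ((subdivGraph H s).induce X).Walk p q) {d : H.G.Dart} {i k : Fin s}
    (hp : p.val = inr (d, i)) (hq : q.val = inr (d, k)) (j : Fin s)
    (hj : i ≤ j ∧ j ≤ k ∨ k ≤ j ∧ j ≤ i) : inr (d, j) ∈ X := by
  induction W generalizing i with
  | @nil p =>
    obtain rfl : i = k := by simpa using hp.symm.trans hq
    obtain rfl : j = i := by omega
    exact hp ▸ p.2
  | @cons p t q hadj W ih =>
    rcases ht : t.val with w | ⟨e, l⟩
    · exact absurd (ht ▸ t.2) (hX w)
    · have hadj : (subdivGraph H s).Adj p.val t.val := hadj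
      rw [hp, ht] at hadj
      obtain ⟨rfl, hil⟩ := adj_inr_inr_iff.mp hadj
      by_cases hjl : l ≤ j ∧ j ≤ k ∨ k ≤ j ∧ j ≤ l
      · exact ih ht hq hjl
      · obtain rfl : j = i := by omega
        exact hp ▸ p.2

def leftExits (X : Set (SubdivVert H s)) : Set (SubdivVert H s) :=
  {b | b ∉ X ∧ ∃ d i, inr (d, i) ∈ X ∧ b = leftNb d i}

def rightExits (X : Set (SubdivVert H s)) : Set (SubdivVert H s) :=
  {b | b ∉ X ∧ ∃ d i, inr (d, i) ∈ X ∧ b = rightNb d i}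

lemma mem_leftExits_or_mem_rightExits (hX : ∀ w, inl w ∉ X) {a b : SubdivVert H s}
    (ha : a ∈ X) (hb : b ∉ X) (hab : (subdivGraph H s).Adj a b) :
    b ∈ leftExits X ∨ b ∈ rightExits X := by
  rcases a with w | ⟨d, i⟩
  · exact absurd ha (hX w)
  · exact (eq_leftNb_or_eq_rightNb_of_adj hab).imp (fun h => ⟨hb, d, i, ha, h⟩)
      (fun h => ⟨hb, d, i, ha, h⟩)

lemma dart_eq_of_mem (hX : ∀ w, inl w ∉ X) (hconn : ((subdivGraph H s).induce X).Preconnected)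
    {d e : H.G.Dart} {i j : Fin s} (hi : inr (d, i) ∈ X) (hj : inr (e, j) ∈ X) :
    d = e := by
  obtain ⟨W⟩ := hconn ⟨_, hi⟩ ⟨_, hj⟩
  obtain ⟨k, hk⟩ := exists_eq_inr_of_walk hX W rfl
  simp only [inr.injEq, Prod.mk.injEq] at hk
  exact hk.1.symm

lemma mem_of_le_of_le (hX : ∀ w, inl w ∉ X)
    (hconn : ((subdivGraph H s).induce X).Preconnected) {d : H.G.Dart} {i j k : Fin s}
    (hi : inr (d, i) ∈ X) (hk : inr (d, k) ∈ X) (hij : i ≤ j) (hjk : j ≤ k) :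
    inr (d, j) ∈ X := by
  obtain ⟨W⟩ := hconn ⟨_, hi⟩ ⟨_, hk⟩
  exact mem_of_walk hX W rfl rfl j (Or.inl ⟨hij, hjk⟩)

lemma leftExits_subsingleton (hX : ∀ w, inl w ∉ X)
    (hconn : ((subdivGraph H s).induce X).Preconnected) : (leftExits X).Subsingleton := by
  rintro _ ⟨hb, d, i, hi, rfl⟩ _ ⟨hb', e, j, hj, rfl⟩
  obtain rfl := dart_eq_of_mem hX hconn hi hj
  suffices ∀ {i j : Fin s}, inr (d, i) ∈ X → inr (d, j) ∈ X → leftNb d j ∉ X → j ≤ i by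
    rw [le_antisymm (this hj hi hb) (this hi hj hb')]
  intro i j hi hj hj'
  by_contra! hij
  have hj0 : j.val ≠ 0 := by omega
  refine hj' ?_
  rw [leftNb, if_neg hj0]
  exact mem_of_le_of_le hX hconn hi hj (by rw [Fin.le_def]; dsimp only; omega)
    (by rw [Fin.le_def]; dsimp only; omega)

lemma rightExits_subsingleton (hX : ∀ w, inl w ∉ X)
    (hconn : ((subdivGraph H s).induce X).Preconnected) : (rightExits X).Subsingleton := by
  rintro _ ⟨hb, d, i, hi, rfl⟩ _ ⟨hb', e, j, hj, rfl⟩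
  obtain rfl := dart_eq_of_mem hX hconn hi hj
  suffices ∀ {i j : Fin s}, inr (d, i) ∈ X → inr (d, j) ∈ X → rightNb d j ∉ X → i ≤ j by
    rw [le_antisymm (this hi hj hb') (this hj hi hb)]
  intro i j hi hj hj'
  by_contra! hij
  have hjs : j.val + 1 ≠ s := by omega
  refine hj' ?_
  rw [rightNb, dif_neg hjs]
  exact mem_of_le_of_le hX hconn hj hi (by rw [Fin.le_def]; dsimp only; omega)
    (by rw [Fin.le_def]; dsimp only; omega)

/-! ### Shallow minors of long subdivisions -/

variable {r : ℕ} {H' : FGraph} {φ : H'.V → Set (SubdivVert H s)}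

lemma branchFree_of_adj (hφ : IsShallowMinorModel r H' (H.subdivision s) φ)
    (hsr : 4 * r + 2 ≤ s) {y₁ y₂ : H'.V} (h : H'.G.Adj y₁ y₂) :
    (∀ w, inl w ∉ φ y₁) ∨ (∀ w, inl w ∉ φ y₂) := by
  by_contra! ⟨⟨u₁, h₁⟩, ⟨u₂, h₂⟩⟩
  obtain ⟨a, ha, b, hb, hab⟩ := hφ.adj y₁ y₂ h
  obtain ⟨p, hp⟩ := hφ.exists_walk_length_le h₁ ha
  obtain ⟨q, hq⟩ := hφ.exists_walk_length_le hb h₂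
  have hne : u₁ ≠ u₂ := by
    rintro rfl
    exact Set.disjoint_left.mp (hφ.disjoint y₁ y₂ h.ne) h₁ h₂
  have := succ_le_length_of_ne hne (p.append (.cons hab q))
  simp only [SimpleGraph.Walk.length_append, SimpleGraph.Walk.length_cons] at this
  omega

lemma exists_mem_exits_of_adj (hφ : IsShallowMinorModel r H' (H.subdivision s) φ)
    {y y' : H'.V} (hy : ∀ w, inl w ∉ φ y) (h : H'.G.Adj y y') :
    ∃ b ∈ φ y', b ∈ leftExits (φ y) ∨ b ∈ rightExits (φ y) := by
  obtain ⟨a, ha, b, hb, hab⟩ := hφ.adj y y' h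
  have hb' : b ∉ φ y := Set.disjoint_right.mp (hφ.disjoint y y' h.ne) hb
  exact ⟨b, hb, mem_leftExits_or_mem_rightExits hy ha hb' hab⟩

/-- A connected set of interior vertices is a segment of one subdivided edge, so it touches at
most two other branch sets: the one containing its left exit and the one containing its right
exit. -/
lemma exists_injOn_neighborSet (hφ : IsShallowMinorModel r H' (H.subdivision s) φ) {y : H'.V}
    (hy : ∀ w, inl w ∉ φ y) : ∃ f : H'.V → Fin 2, Set.InjOn f (H'.G.neighborSet y) := by
  classical
  have hconn := hφ.preconnected y
  refine ⟨fun y' => if (leftExits (φ y) ∩ φ y').Nonempty then 0 else 1, fun y₁ h₁ y₂ h₂ h => ?_⟩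
  by_contra hne
  have hdisj := Set.disjoint_left.mp (hφ.disjoint y₁ y₂ hne)
  obtain ⟨b₁, hb₁, hex₁⟩ := exists_mem_exits_of_adj hφ hy h₁
  obtain ⟨b₂, hb₂, hex₂⟩ := exists_mem_exits_of_adj hφ hy h₂
  dsimp only at h
  split_ifs at h with hl₁ hl₂ hl₂
  · obtain ⟨c₁, hc₁, hc₁'⟩ := hl₁
    obtain ⟨c₂, hc₂, hc₂'⟩ := hl₂
    exact hdisj hc₁' (leftExits_subsingleton hy hconn hc₁ hc₂ ▸ hc₂')
  · exact absurd h (by decide)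
  · exact absurd h (by decide)
  · have hr₁ := hex₁.resolve_left fun hb => hl₁ ⟨b₁, hb, hb₁⟩
    have hr₂ := hex₂.resolve_left fun hb => hl₂ ⟨b₂, hb, hb₂⟩
    exact hdisj hb₁ (rightExits_subsingleton hy hconn hr₁ hr₂ ▸ hb₂)

lemma avgDegLE_four_of_isShallowMinor (hsr : 4 * r + 2 ≤ s)
    (h : IsShallowMinor r H' (H.subdivision s)) : AvgDegLE H' 4 := by
  obtain ⟨φ, hφ⟩ := isShallowMinor_iff.mp h
  exact H'.G.two_mul_natCard_edgeSet_le_of_cover _ (fun _ _ => branchFree_of_adj hφ hsr)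
    (fun _ => exists_injOn_neighborSet hφ)

end Subdivision

lemma boundedExpansion_subdivisions (H : ℕ → FGraph) :
    BoundedExpansion {X | ∃ n, Nonempty (X.G ≃g ((H n).subdivision (n + 1)).G)} := by
  refine ⟨fun r => 4 + (Finset.range (4 * r + 2)).sup fun n =>
    Nat.card ((H n).subdivision (n + 1)).V, fun r X ⟨n, ⟨e⟩⟩ H' hm => ?_⟩
  obtain ⟨φ, hφ⟩ := isShallowMinor_iff.mp hm
  have hm' := isShallowMinor_iff.mpr ⟨_, hφ.map_iso e⟩
  by_cases hn : 4 * r + 2 ≤ n + 1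
  · exact (Subdivision.avgDegLE_four_of_isShallowMinor hn hm').mono (Nat.le_add_right _ _)
  · refine hm'.avgDegLE_natCard.mono (le_add_left ?_)
    exact Finset.le_sup (f := fun n => Nat.card ((H n).subdivision (n + 1)).V)
      (Finset.mem_range.mpr (by omega))

namespace Interp

variable {c : ℕ}

/-- Keeps the `ν`-vertices of the new color and joins two of them when an `η`-path links them
through exactly `s` `ν`-vertices without the new color. -/
def unsubdivide (I : Interp c) (s : ℕ) : Interp (c + 1) where
  ν := (I.ν.recolor Fin.castSucc).and (.col (Fin.last c) 0)
  η := ((Fml.not (.eq 0 1)).and ((Fml.col (Fin.last c) 0).and (Fml.col (Fin.last c) 1))).and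
    ((I.η.recolor Fin.castSucc).chain (I.ν.recolor Fin.castSucc) (Fin.last c) s)
  symm A u v h := by
    simp only [Fml.sat_and, Fml.sat_chain] at h ⊢
    obtain ⟨⟨hne, hu, hv⟩, hc⟩ := h
    refine ⟨⟨fun h => hne (by simpa [Fml.Sat] using h.symm), hv, hu⟩, hc.symm fun a b hab => ?_⟩
    rw [Fml.sat_recolor] at hab ⊢
    exact I.symm (A.comapColor Fin.castSucc) a b hab
  irrefl A v h := by simp [Fml.Sat] at h

lemma sat_unsubdivide_ν (I : Interp c) (s : ℕ) (A : CGraph c) (M : Set A.V) (a : A.V) :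
    Fml.Sat (A.addColor M) (I.unsubdivide s).ν ![a] ↔ Fml.Sat A I.ν ![a] ∧ a ∈ M := by
  simp [unsubdivide, Fml.sat_recolor_castSucc_addColor, Fml.Sat]

lemma sat_unsubdivide_η (I : Interp c) (s : ℕ) (A : CGraph c) (M : Set A.V) (a b : A.V) :
    Fml.Sat (A.addColor M) (I.unsubdivide s).η ![a, b] ↔ a ≠ b ∧ a ∈ M ∧ b ∈ M ∧
      chainRel (fun x y => Fml.Sat A I.η ![x, y]) (fun z => Fml.Sat A I.ν ![z] ∧ z ∉ M) s a b := by
  simp [unsubdivide, Fml.sat_chain, Fml.sat_recolor_castSucc_addColor, Fml.Sat, and_assoc]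

lemma nonempty_iso_unsubdivide (I : Interp c) {s : ℕ} (hs : 1 ≤ s) {A : CGraph c} {H : FGraph}
    (e : (H.subdivision s).G ≃g I.result A) :
    Nonempty (H.G ≃g
      (I.unsubdivide s).result (A.addColor (Set.range fun u => (e (.inl u)).val))) := by
  set f : SubdivVert H s → A.V := fun x => (e x).val
  set M := Set.range fun u => f (.inl u)
  have hf : f.Injective := Subtype.val_injective.comp e.injective
  have hchain (u v : H.V) :
      chainRel (fun x y => Fml.Sat A I.η ![x, y]) (fun z => Fml.Sat A I.ν ![z] ∧ z ∉ M) s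
        (f (.inl u)) (f (.inl v)) ↔
      chainRel (subdivGraph H s).Adj (· ∉ Set.range Sum.inl) s (.inl u) (.inl v) := by
    refine chainRel.map_iff (f := f) (fun a b => e.map_adj_iff) (fun z => ?_) s _ _
    constructor
    · rintro ⟨hz, hzM⟩
      refine ⟨e.symm ⟨z, hz⟩, fun ⟨w, hw⟩ => hzM ⟨w, ?_⟩, by simp [f]⟩
      simp [f, hw]
    · rintro ⟨a, ha, rfl⟩
      exact ⟨(e a).2, fun ⟨w, hw⟩ => ha ⟨w, hf hw⟩⟩
  let F : H.V → {a // Fml.Sat (A.addColor M) (I.unsubdivide s).ν ![a]} := fun u =>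
    ⟨f (.inl u), (sat_unsubdivide_ν I s A M _).mpr ⟨(e _).2, u, rfl⟩⟩
  have hF : F.Bijective := by
    refine ⟨fun u v huv => Sum.inl_injective (hf (by simpa [F] using huv)), ?_⟩
    rintro ⟨a, ha⟩
    obtain ⟨-, u, rfl⟩ := (sat_unsubdivide_ν I s A M a).mp ha
    exact ⟨u, rfl⟩
  refine ⟨⟨Equiv.ofBijective F hF, fun {u v} => ?_⟩⟩
  change Fml.Sat (A.addColor M) (I.unsubdivide s).η ![f (.inl u), f (.inl v)] ↔ H.G.Adj u v
  rw [sat_unsubdivide_η, hchain, Subdivision.adj_iff_chainRel hs]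
  simp [hf.eq_iff, M]

end Interp

def Transduction.unsubdivide (T : Transduction) (s : ℕ) : Transduction :=
  { T with c := T.c + 1, I := T.I.unsubdivide s }

lemma Transduction.mem_unsubdivide (T : Transduction) {s : ℕ} (hs : 1 ≤ s) {G H : FGraph}
    (h : T.mem G (H.subdivision s)) : (T.unsubdivide s).mem G H := by
  obtain ⟨γ, ⟨e⟩⟩ := h
  exact ⟨Fin.snoc γ _, T.I.nonempty_iso_unsubdivide hs e⟩

def Fml.toNat {c : ℕ} : {m : ℕ} → Fml c m → ℕ
  | _, .eq i j => Nat.pair 0 (Nat.pair i j)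
  | _, .adj i j => Nat.pair 1 (Nat.pair i j)
  | _, .col i x => Nat.pair 2 (Nat.pair i x)
  | _, .not φ => Nat.pair 3 φ.toNat
  | _, .or φ ψ => Nat.pair 4 (Nat.pair φ.toNat ψ.toNat)
  | _, .ex φ => Nat.pair 5 φ.toNat

lemma Fml.toNat_injective {c m : ℕ} : Function.Injective (toNat : Fml c m → ℕ) := by
  intro φ
  induction φ with
  | eq | adj | col => intro ψ h; cases ψ <;> simp_all [Fml.toNat, Nat.pair_eq_pair, Fin.ext_iff]
  | not φ ih | ex φ ih =>
    intro ψ h; cases ψ <;> simp [Fml.toNat] at h; rw [ih h]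
  | or φ₁ φ₂ ih₁ ih₂ =>
    intro ψ h; cases ψ <;> simp [Fml.toNat, Nat.pair_eq_pair] at h; rw [ih₁ h.1, ih₂ h.2]

instance {c m : ℕ} : Countable (Fml c m) := Fml.toNat_injective.countable

instance : Countable Transduction := by
  refine Function.Injective.countable
    (f := fun T : Transduction => (T.k, (⟨T.c, T.I.ν, T.I.η⟩ : Σ c, Fml c 1 × Fml c 2))) ?_
  rintro ⟨k, _, c, ν, η, _, _⟩ ⟨k', _, c', ν', η', _, _⟩ h
  simp only [Prod.mk.injEq, Sigma.mk.injEq] at h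
  obtain ⟨rfl, rfl, h⟩ := h
  simp only [heq_eq_eq, Prod.mk.injEq] at h
  obtain ⟨rfl, rfl⟩ := h
  rfl

instance : Nonempty Transduction :=
  ⟨⟨1, one_pos, 0, .eq 0 0, .adj 0 1, fun A _ _ h => A.G.adj_symm h, fun A _ h => A.G.irrefl h⟩⟩

theorem no_maximum_above_bounded_expansion (B : Set FGraph)
    (h : ∀ C : Set FGraph, IsoClosed C → BoundedExpansion C → SqFO C B) :
    SqFO Set.univ B := by
  by_contra hB
  obtain ⟨T, hT⟩ := exists_surjective_nat Transduction
  have hH (n : ℕ) : ∃ H, H ∉ TImage ((T n).unsubdivide (n + 1)) B := by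
    by_contra! hn
    exact hB ⟨_, fun H _ => hn H⟩
  choose H hH using hH
  set D := {X : FGraph | ∃ n, Nonempty (X.G ≃g ((H n).subdivision (n + 1)).G)}
  have hD : IsoClosed D := fun X Y ⟨e⟩ ⟨n, ⟨e'⟩⟩ => ⟨n, ⟨e.symm.trans e'⟩⟩
  obtain ⟨T₀, hDB⟩ := h D hD (boundedExpansion_subdivisions H)
  obtain ⟨n, rfl⟩ := hT T₀
  obtain ⟨G, hG, hmem⟩ := hDB ⟨n, ⟨.refl⟩⟩
  exact hH n ⟨G, hG, (T n).mem_unsubdivide n.succ_pos hmem⟩
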